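/- arXiv:1407.1557 — 8 statements merged into one kernel-verified Lean document; each statement's English description precedes it below -/
import Mathlib

section
/- Let λ_i, λ_j > 0 with λ_j > λ_i, and define on basis vectors S(e_ℓ^{(λ_j)}) = ((ℓ+k)!/ℓ!) √(a_{ℓ+k}(λ_i)/a_ℓ(λ_j)) e_{ℓ+k}^{(λ_i)} where k = j - i - 1 ≥ 0. Then the sequence of norms ((ℓ+k)!/ℓ!) √(a_{ℓ+k}(λ_i)/a_ℓ(λ_j)) is bounded if and only if λ_j - λ_i ≥ 2(j-i) - 2. -/
/-- The Taylor coefficient `a_n(λ) = (λ)_n / n!` of `(1 - x)^{-λ}`. -/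
noncomputable def bergmanCoeff (lam : ℝ) (n : ℕ) : ℝ :=
  (ascPochhammer ℝ n).eval lam / n.factorial

/-! With `a = λ_i`, `b = λ_j`, the squared weight is `(ℓ+1)_k (a)_{ℓ+k} / (b)_ℓ`, and telescoping
Pochhammer symbols rewrites it as `(a)_{2k} · (ℓ+1)_k / (a+ℓ+k)_k · (a+2k)_ℓ / (b)_ℓ`.
The middle factor stays between two positive constants, so everything hinges on
`(a+2k)_ℓ / (b)_ℓ = ∏_{m<ℓ} (a+2k+m)/(b+m)`: all its factors are at most `1` when `a + 2k ≤ b`,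
while for `b < a + 2k` the product dominates a multiple of the divergent series `∑ 1/(b+m)`. -/

open Filter Finset Polynomial

section Pochhammer

variable {R : Type*} [CommSemiring R]

theorem ascPochhammer_eval_eq_prod_range (x : R) (n : ℕ) :
    (ascPochhammer R n).eval x = ∏ m ∈ range n, (x + m) := by
  induction n with
  | zero => simp
  | succ n ih => rw [ascPochhammer_succ_eval, ih, prod_range_succ]

theorem ascPochhammer_eval_add (x : R) (m n : ℕ) :
    (ascPochhammer R (m + n)).eval x =
      (ascPochhammer R m).eval x * (ascPochhammer R n).eval (x + m) := by
  rw [← ascPochhammer_mul, eval_mul, eval_comp, eval_add, eval_X, eval_natCast]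

theorem ascPochhammer_eval_le_pow_mul [PartialOrder R] [IsOrderedRing R] {x y c : R}
    (hx : 0 ≤ x) (hxy : x ≤ c * y) (hc : 1 ≤ c) (n : ℕ) :
    (ascPochhammer R n).eval x ≤ c ^ n * (ascPochhammer R n).eval y := by
  rw [ascPochhammer_eval_eq_prod_range, ascPochhammer_eval_eq_prod_range]
  calc ∏ m ∈ range n, (x + m) ≤ ∏ m ∈ range n, c * (y + m) := by
        refine prod_le_prod (fun m _ => by positivity) fun m _ => ?_
        rw [mul_add]
        exact add_le_add hxy (le_mul_of_one_le_left (by positivity) hc)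
    _ = c ^ n * ∏ m ∈ range n, (y + m) := by rw [prod_mul_distrib, prod_const, card_range]

end Pochhammer

theorem Finset.one_add_sum_le_prod_one_add {ι R : Type*} [CommSemiring R] [PartialOrder R]
    [IsOrderedRing R] (s : Finset ι) {f : ι → R} (hf : ∀ i ∈ s, 0 ≤ f i) :
    1 + ∑ i ∈ s, f i ≤ ∏ i ∈ s, (1 + f i) := by
  classical
  induction s using Finset.induction with
  | empty => simp
  | insert a s ha ih =>
    rw [sum_insert ha, prod_insert ha]
    have hfa := hf a (mem_insert_self a s)
    have hs := ih fun i hi => hf i (mem_insert_of_mem hi)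
    have hsum : 0 ≤ ∑ i ∈ s, f i := sum_nonneg fun i hi => hf i (mem_insert_of_mem hi)
    calc 1 + (f a + ∑ i ∈ s, f i) = f a + (1 + ∑ i ∈ s, f i) := add_left_comm _ _ _
      _ ≤ f a * (1 + ∑ i ∈ s, f i) + (1 + ∑ i ∈ s, f i) :=
          add_le_add_left (le_mul_of_one_le_right hfa (le_add_of_nonneg_right hsum)) _
      _ = (1 + f a) * (1 + ∑ i ∈ s, f i) := by ring
      _ ≤ (1 + f a) * ∏ i ∈ s, (1 + f i) :=
          mul_le_mul_of_nonneg_left hs (add_nonneg zero_le_one hfa)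

theorem tendsto_sum_range_one_div_add_nat_atTop {b : ℝ} (hb : 0 < b) :
    Tendsto (fun ℓ => ∑ m ∈ range ℓ, 1 / (b + m)) atTop atTop := by
  have h := (Real.summable_one_div_nat_add_rpow b 1).not.mpr (lt_irrefl 1)
  rw [not_summable_iff_tendsto_nat_atTop_of_nonneg (fun n => by positivity)] at h
  refine h.congr fun ℓ => sum_congr rfl fun m _ => ?_
  rw [Real.rpow_one, abs_of_pos (by positivity), add_comm]

theorem tendsto_ascPochhammer_eval_div_atTop {b c : ℝ} (hb : 0 < b) (hbc : b < c) :
    Tendsto (fun ℓ => (ascPochhammer ℝ ℓ).eval c / (ascPochhammer ℝ ℓ).eval b) atTop atTop := by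
  refine tendsto_atTop_mono (fun ℓ => ?_)
    ((tendsto_sum_range_one_div_add_nat_atTop hb).const_mul_atTop (sub_pos.mpr hbc))
  have hterm : ∀ m ∈ range ℓ, 0 ≤ (c - b) / (b + m) := fun m _ => by
    have := sub_pos.mpr hbc
    positivity
  calc (c - b) * ∑ m ∈ range ℓ, 1 / (b + m)
      ≤ 1 + ∑ m ∈ range ℓ, (c - b) / (b + m) := by
        simp only [mul_sum, mul_one_div, le_add_iff_nonneg_left, zero_le_one]
    _ ≤ ∏ m ∈ range ℓ, (1 + (c - b) / (b + m)) := one_add_sum_le_prod_one_add _ hterm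
    _ = (ascPochhammer ℝ ℓ).eval c / (ascPochhammer ℝ ℓ).eval b := by
        rw [ascPochhammer_eval_eq_prod_range, ascPochhammer_eval_eq_prod_range,
          ← prod_div_distrib]
        refine prod_congr rfl fun m _ => ?_
        field_simp
        ring

/-- `‖S e_ℓ^{(b)}‖` for the shift `S : A^{(b)} → A^{(a)}` of multiplicity `k`. -/
noncomputable def shiftWeight (a b : ℝ) (k ℓ : ℕ) : ℝ :=
  (((ℓ + k).factorial : ℝ) / (ℓ.factorial : ℝ)) *
    Real.sqrt (bergmanCoeff a (ℓ + k) / bergmanCoeff b ℓ)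

theorem ascPochhammer_eval_mul_eq_mul_ascPochhammer_eval (a : ℝ) (k ℓ : ℕ) :
    (ascPochhammer ℝ ℓ).eval a * (ascPochhammer ℝ k).eval (a + ℓ) *
        (ascPochhammer ℝ k).eval (a + ℓ + k) =
      (ascPochhammer ℝ (2 * k)).eval a * (ascPochhammer ℝ ℓ).eval (a + 2 * k) := by
  calc _ = (ascPochhammer ℝ (ℓ + k + k)).eval a := by
          rw [ascPochhammer_eval_add, ascPochhammer_eval_add, Nat.cast_add, add_assoc a]
    _ = (ascPochhammer ℝ (2 * k + ℓ)).eval a := by ring_nf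
    _ = _ := by
          rw [ascPochhammer_eval_add]
          push_cast
          rfl

theorem shiftWeight_eq_sqrt {a b : ℝ} (ha : 0 < a) (hb : 0 < b) (k ℓ : ℕ) :
    shiftWeight a b k ℓ = √((ascPochhammer ℝ (2 * k)).eval a *
      ((ascPochhammer ℝ k).eval ((ℓ : ℝ) + 1) / (ascPochhammer ℝ k).eval (a + ℓ + k)) *
      ((ascPochhammer ℝ ℓ).eval (a + 2 * k) / (ascPochhammer ℝ ℓ).eval b)) := by
  set F := (ascPochhammer ℝ k).eval ((ℓ : ℝ) + 1)
  have hF : 0 < F := ascPochhammer_pos k _ (by positivity)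
  have hfac : ((ℓ + k).factorial : ℝ) = ℓ.factorial * F := by
    rw [← Nat.factorial_mul_ascFactorial, Nat.cast_mul, Nat.cast_ascFactorial]
    push_cast
    rfl
  have hbℓ : 0 < (ascPochhammer ℝ ℓ).eval b := ascPochhammer_pos ℓ b hb
  have hk : 0 < (ascPochhammer ℝ k).eval (a + ℓ + k) := ascPochhammer_pos k _ (by positivity)
  have hcomm := ascPochhammer_eval_mul_eq_mul_ascPochhammer_eval a k ℓ
  rw [shiftWeight, bergmanCoeff, bergmanCoeff, hfac, ascPochhammer_eval_add,
    mul_div_cancel_left₀ _ (by positivity), ← Real.sqrt_sq hF.le, ← Real.sqrt_mul (sq_nonneg F),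
    Real.sqrt_sq hF.le]
  congr 1
  -- opaque, so that `field_simp` leaves the argument `a + 2 * k` alone
  set S := (ascPochhammer ℝ ℓ).eval (a + 2 * k)
  field_simp
  linear_combination hcomm

theorem ascPochhammer_eval_div_le_one {b c : ℝ} (hc : 0 < c) (hcb : c ≤ b) (ℓ : ℕ) :
    (ascPochhammer ℝ ℓ).eval c / (ascPochhammer ℝ ℓ).eval b ≤ 1 :=
  div_le_one_of_le₀
    (by simpa using ascPochhammer_eval_le_pow_mul hc.le (by simpa using hcb) le_rfl ℓ)
    (ascPochhammer_pos ℓ b (hc.trans_le hcb)).le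

theorem ascPochhammer_eval_succ_div_le {a : ℝ} (ha : 0 < a) (k ℓ : ℕ) :
    (ascPochhammer ℝ k).eval ((ℓ : ℝ) + 1) / (ascPochhammer ℝ k).eval (a + ℓ + k) ≤
      (1 + 1 / a) ^ k := by
  rw [div_le_iff₀ (ascPochhammer_pos k _ (by positivity))]
  refine ascPochhammer_eval_le_pow_mul (by positivity) ?_ (by simp [ha.le]) k
  have hexpand : (1 + 1 / a) * (a + ℓ + k) = a + ℓ + k + 1 + (ℓ + k) / a := by
    field_simp
    ring
  have : 0 ≤ ((ℓ : ℝ) + k) / a := by positivity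
  linarith

theorem one_div_pow_le_ascPochhammer_eval_succ_div {a : ℝ} (ha : 0 < a) (k ℓ : ℕ) :
    1 / (a + k + 1) ^ k ≤
      (ascPochhammer ℝ k).eval ((ℓ : ℝ) + 1) / (ascPochhammer ℝ k).eval (a + ℓ + k) := by
  have hpos : 0 < (ascPochhammer ℝ k).eval (a + ℓ + k) := ascPochhammer_pos k _ (by positivity)
  rw [div_le_div_iff₀ (by positivity) hpos, one_mul, mul_comm]
  refine ascPochhammer_eval_le_pow_mul (by positivity) ?_ (le_add_of_nonneg_left (by positivity)) k
  nlinarith [(k.cast_nonneg : (0 : ℝ) ≤ k), (ℓ.cast_nonneg : (0 : ℝ) ≤ ℓ)]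

theorem exists_forall_shiftWeight_le_iff {a b : ℝ} (ha : 0 < a) (hb : 0 < b) (k : ℕ) :
    (∃ C, ∀ ℓ, shiftWeight a b k ℓ ≤ C) ↔ a + 2 * k ≤ b := by
  set A := (ascPochhammer ℝ (2 * k)).eval a
  have hA : 0 < A := ascPochhammer_pos _ _ ha
  have hσ : ∀ ℓ, 0 ≤ (ascPochhammer ℝ ℓ).eval (a + 2 * k) / (ascPochhammer ℝ ℓ).eval b :=
    fun ℓ => div_nonneg (ascPochhammer_pos ℓ _ (by positivity)).le (ascPochhammer_pos ℓ b hb).le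
  constructor
  · rintro ⟨C, hC⟩
    by_contra! hlt
    have hw : Tendsto (shiftWeight a b k) atTop atTop := by
      refine (Real.tendsto_sqrt_atTop.comp (tendsto_atTop_mono (fun ℓ => ?_)
        ((tendsto_ascPochhammer_eval_div_atTop hb hlt).const_mul_atTop
          (mul_pos hA (by positivity : (0 : ℝ) < 1 / (a + k + 1) ^ k))))).congr
        fun ℓ => (shiftWeight_eq_sqrt ha hb k ℓ).symm
      exact mul_le_mul_of_nonneg_right (mul_le_mul_of_nonneg_left
        (one_div_pow_le_ascPochhammer_eval_succ_div ha k ℓ) hA.le) (hσ ℓ)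
    obtain ⟨ℓ, hℓ⟩ := (hw.eventually_gt_atTop C).exists
    exact (hℓ.trans_le (hC ℓ)).false
  · intro hle
    refine ⟨√(A * (1 + 1 / a) ^ k * 1), fun ℓ => ?_⟩
    rw [shiftWeight_eq_sqrt ha hb]
    exact Real.sqrt_le_sqrt (mul_le_mul
      (mul_le_mul_of_nonneg_left (ascPochhammer_eval_succ_div_le ha k ℓ) hA.le)
      (ascPochhammer_eval_div_le_one (by positivity) hle ℓ) (hσ ℓ) (by positivity))

/-- Let `λ_j > λ_i > 0`, `i < j` and `k = j - i - 1 ≥ 0`.  The weight sequence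
`((ℓ+k)!/ℓ!) √(a_{ℓ+k}(λ_i)/a_ℓ(λ_j))` of the shift `S` of multiplicity `k`
is bounded if and only if `λ_j - λ_i ≥ 2(j-i) - 2`. -/
theorem stmt_3 (lami lamj : ℝ) (hi : 0 < lami) (hij : lami < lamj)
    (i j k : ℕ) (hij' : i < j) (hk : k = j - i - 1) :
    (∃ C : ℝ, ∀ ℓ : ℕ,
        (((ℓ + k).factorial : ℝ) / (ℓ.factorial : ℝ)) *
          Real.sqrt (bergmanCoeff lami (ℓ + k) / bergmanCoeff lamj ℓ) ≤ C)
      ↔ lamj - lami ≥ 2 * ((j : ℝ) - (i : ℝ)) - 2 := by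
  obtain rfl : j = i + k + 1 := by omega
  have hexp : 2 * (((i + k + 1 : ℕ) : ℝ) - i) - 2 = 2 * k := by push_cast; ring
  rw [hexp, ge_iff_le, le_sub_iff_add_le']
  exact exists_forall_shiftWeight_le_iff hi (hi.trans hij) k
end

section
/- Let A, B, P ∈ L(H) be bounded operators on a Hilbert space. If P = AX - XB for some bounded X (i.e. P lies in the range of the Rosenblum operator τ_{A,B}) with A = B = T₀, and P commutes with T₀, then P is quasi-nilpotent, i.e. its spectrum is {0}. -/
/-!
Let `δ = [T₀, ·]`. Since `δ X = P` and `δ P = 0`, the Leibniz rule gives the Kleinecke–Shirokov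
identity `δⁿ (Xⁿ) = n! Pⁿ`. As `‖δ‖ ≤ 2‖T₀‖`, this yields `n! ‖Pⁿ‖ ≤ (2‖T₀‖‖X‖)ⁿ`, so
`‖Pⁿ‖^{1/n} → 0` because the factorial outgrows every geometric sequence. Hence the spectral
radius of `P` vanishes, and the spectrum, being nonempty, is `{0}`.
-/

open LieAlgebra Filter
open scoped Nat

attribute [local instance 100] LieRing.ofAssociativeRing

section Algebraic

variable {A : Type*} [Ring A]

lemma ad_mul (t a b : A) : ad ℤ A t (a * b) = ad ℤ A t a * b + a * ad ℤ A t b := by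
  simp only [ad_apply, Ring.lie_def]
  noncomm_ring

variable {t x p : A}

lemma ad_pow_mul_of_lie_eq_zero (hp : ⁅t, p⁆ = 0) (n : ℕ) (b : A) :
    (ad ℤ A t ^ n) (p * b) = p * (ad ℤ A t ^ n) b := by
  induction n with
  | zero => rfl
  | succ n ih => rw [pow_succ', Module.End.mul_apply, ih, ad_mul, ad_apply, hp, zero_mul,
      zero_add, Module.End.mul_apply]

lemma ad_pow_succ_mul (hx : ⁅t, x⁆ = p) (hp : ⁅t, p⁆ = 0) (m : ℕ) (b : A) :
    (ad ℤ A t ^ (m + 1)) (x * b) =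
      x * (ad ℤ A t ^ (m + 1)) b + (m + 1) • (p * (ad ℤ A t ^ m) b) := by
  induction m generalizing b with
  | zero =>
    rw [zero_add, pow_one, pow_zero, one_smul, Module.End.one_apply, ad_mul, ad_apply ℤ A t x, hx,
      add_comm]
  | succ m ih =>
    rw [pow_succ, Module.End.mul_apply, ad_mul, ad_apply ℤ A t x, hx, map_add, ih,
      ad_pow_mul_of_lie_eq_zero hp, ← Module.End.mul_apply, ← Module.End.mul_apply, ← pow_succ,
      ← pow_succ, succ_nsmul _ (m + 1)]
    abel

lemma ad_pow_pow_of_lie_eq (hx : ⁅t, x⁆ = p) (hp : ⁅t, p⁆ = 0) (n : ℕ) :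
    (ad ℤ A t ^ n) (x ^ n) = n ! • p ^ n ∧ (ad ℤ A t ^ (n + 1)) (x ^ n) = 0 := by
  induction n with
  | zero => simp [Ring.lie_def]
  | succ n ih =>
    obtain ⟨h_eq, h_zero⟩ := ih
    have h_zero' : (ad ℤ A t ^ (n + 2)) (x ^ n) = 0 := by
      rw [pow_succ', Module.End.mul_apply, h_zero, map_zero]
    rw [pow_succ' x n, ad_pow_succ_mul hx hp, ad_pow_succ_mul hx hp, h_zero, h_zero', h_eq]
    refine ⟨?_, by simp⟩
    rw [mul_zero, zero_add, mul_smul_comm, ← pow_succ', smul_smul, Nat.factorial_succ]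

end Algebraic

section Analytic

variable {A : Type*} [NormedRing A]

lemma norm_ad_pow_apply_le (t y : A) (n : ℕ) :
    ‖(ad ℤ A t ^ n) y‖ ≤ (2 * ‖t‖) ^ n * ‖y‖ := by
  induction n with
  | zero => simp
  | succ n ih =>
    rw [pow_succ', Module.End.mul_apply, ad_apply, Ring.lie_def]
    calc ‖t * (ad ℤ A t ^ n) y - (ad ℤ A t ^ n) y * t‖
        ≤ ‖t‖ * ‖(ad ℤ A t ^ n) y‖ + ‖(ad ℤ A t ^ n) y‖ * ‖t‖ :=
          (norm_sub_le _ _).trans (add_le_add (norm_mul_le _ _) (norm_mul_le _ _))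
      _ = 2 * ‖t‖ * ‖(ad ℤ A t ^ n) y‖ := by ring
      _ ≤ 2 * ‖t‖ * ((2 * ‖t‖) ^ n * ‖y‖) := by gcongr
      _ = (2 * ‖t‖) ^ (n + 1) * ‖y‖ := by ring

lemma factorial_mul_norm_pow_le_of_lie_eq [NormedSpace ℝ A] [NormOneClass A] {t x p : A}
    (hx : ⁅t, x⁆ = p) (hp : ⁅t, p⁆ = 0) (n : ℕ) :
    n ! * ‖p ^ n‖ ≤ (2 * ‖t‖ * ‖x‖) ^ n := by
  calc (n ! : ℝ) * ‖p ^ n‖ = ‖(ad ℤ A t ^ n) (x ^ n)‖ := by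
        rw [(ad_pow_pow_of_lie_eq hx hp n).1, RCLike.norm_nsmul ℝ, nsmul_eq_mul]
    _ ≤ (2 * ‖t‖) ^ n * ‖x ^ n‖ := norm_ad_pow_apply_le t _ n
    _ ≤ (2 * ‖t‖) ^ n * ‖x‖ ^ n := by gcongr; exact norm_pow_le x n
    _ = (2 * ‖t‖ * ‖x‖) ^ n := by rw [mul_pow, mul_pow, mul_pow]

end Analytic

lemma exists_pow_lt_factorial_mul_pow (C : ℝ) {ε : ℝ} (hε : 0 < ε) :
    ∃ n, 0 < n ∧ C ^ n < n ! * ε ^ n := by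
  obtain ⟨N, hN⟩ := eventually_atTop.mp
    ((FloorSemiring.tendsto_pow_div_factorial_atTop (C / ε)).eventually_lt_const one_pos)
  refine ⟨N + 1, N.succ_pos, ?_⟩
  have h := hN (N + 1) N.le_succ
  rw [div_pow, div_div, div_lt_one (by positivity)] at h
  linarith

section Spectral

variable {𝕜 A : Type*} [NormedField 𝕜] [NormedRing A] [NormedAlgebra 𝕜 A] [CompleteSpace A]
  [NormOneClass A]

lemma spectralRadius_eq_zero_of_factorial_mul_norm_pow_le {a : A} {C : ℝ}
    (h : ∀ n : ℕ, n ! * ‖a ^ n‖ ≤ C ^ n) : spectralRadius 𝕜 a = 0 := by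
  have h_ne_top : spectralRadius 𝕜 a ≠ ⊤ :=
    ne_top_of_le_ne_top ENNReal.coe_ne_top (spectrum.spectralRadius_le_nnnorm a)
  set r := (spectralRadius 𝕜 a).toReal
  have h_pow_le (n : ℕ) (hn : n ≠ 0) : r ^ n ≤ ‖a ^ n‖ := by
    rw [← ENNReal.toReal_pow, ← coe_nnnorm]
    exact ENNReal.toReal_mono ENNReal.coe_ne_top
      ((spectrum.spectralRadius_pow_le a n hn).trans (spectrum.spectralRadius_le_nnnorm _))
  have h_le (ε : ℝ) (hε : 0 < ε) : r ≤ ε := by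
    obtain ⟨n, hn, hC⟩ := exists_pow_lt_factorial_mul_pow C hε
    refine (lt_of_pow_lt_pow_left₀ n hε.le ?_).le
    have h_fac : (0 : ℝ) < n ! := by positivity
    have := h n
    have := h_pow_le n hn.ne'
    nlinarith
  have hr : r = 0 :=
    le_antisymm (le_of_forall_pos_le_add (by simpa using h_le)) ENNReal.toReal_nonneg
  exact ((ENNReal.toReal_eq_zero_iff _).mp hr).resolve_right h_ne_top

end Spectral

lemma spectrum_eq_singleton_zero_of_spectralRadius_eq_zero {A : Type*} [NormedRing A]
    [NormedAlgebra ℂ A] [CompleteSpace A] [Nontrivial A] {a : A} (ha : spectralRadius ℂ a = 0) :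
    spectrum ℂ a = {0} := by
  refine Set.eq_singleton_iff_nonempty_unique_mem.mpr ⟨spectrum.nonempty a, fun k hk => ?_⟩
  by_contra hk0
  exact hk <| spectrum.mem_resolventSet_of_spectralRadius_lt <| by
    simpa [ha, pos_iff_ne_zero] using hk0

/-- If `P = T₀X - XT₀` lies in the range of the Rosenblum operator `σ_{T₀}`
and `P` commutes with `T₀`, then `P` is quasi-nilpotent: its spectrum is `{0}`. -/
theorem stmt_4 {H : Type*} [NormedAddCommGroup H] [InnerProductSpace ℂ H]
    [CompleteSpace H] [Nontrivial H]
    (T₀ X P : H →L[ℂ] H)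
    (hP : P = T₀ ∘L X - X ∘L T₀)
    (hcomm : P ∘L T₀ = T₀ ∘L P) :
    spectrum ℂ P = {0} := by
  have hX : ⁅T₀, X⁆ = P := by rw [Ring.lie_def, hP]; rfl
  have hT₀P : ⁅T₀, P⁆ = 0 := commute_iff_lie_eq.mp (Eq.symm hcomm)
  exact spectrum_eq_singleton_zero_of_spectralRadius_eq_zero
    (spectralRadius_eq_zero_of_factorial_mul_norm_pow_le
      (factorial_mul_norm_pow_le_of_lie_eq hX hT₀P))
end

section
/- Let P be a bounded operator on a Hilbert space H and γ, γ̃: Ω → H \ {0} holomorphic non-vanishing maps on a connected open set Ω, spanning line bundles whose sections span H, such that for every w ∈ Ω, P γ(w) is a nonzero scalar multiple of γ̃(w) or zero. If P ≠ 0 then the range of P is dense in the closed span of {γ̃(w) : w ∈ Ω}. -/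
/-!
`P ∘ γ` is holomorphic on `Ω` and, as the `γ(w)` span a dense subspace and `P ≠ 0`, not
identically zero; by the identity theorem its zeros are isolated. Away from them the intertwining
relation `P γ(w) = c • γ̃(w)` forces `c ≠ 0`, so `γ̃(w) ∈ range P`, and continuity of `γ̃` puts
every `γ̃(w)` in the closure of the range. Conversely `P` maps the span of the `γ(w)`, which is
dense, into the span of the `γ̃(w)`.
-/

open Filter Topology Set Submodule

theorem LinearMap.mem_range_of_apply_eq_smul {K M N : Type*} [DivisionRing K] [AddCommGroup M]
    [Module K M] [AddCommGroup N] [Module K N] (f : M →ₗ[K] N) {x : M} {y : N} {c : K}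
    (hc : f x = c • y) (hfx : f x ≠ 0) : y ∈ range f := by
  have hc0 : c ≠ 0 := by
    rintro rfl
    exact hfx (by rw [hc, zero_smul])
  exact ⟨c⁻¹ • x, by rw [map_smul, hc, smul_smul, inv_mul_cancel₀ hc0, one_smul]⟩

theorem ContinuousLinearMap.range_le_topologicalClosure_of_dense_span {R M N : Type*} [Ring R]
    [TopologicalSpace R] [AddCommGroup M] [TopologicalSpace M] [Module R M] [ContinuousAdd M]
    [ContinuousSMul R M] [AddCommGroup N] [TopologicalSpace N] [Module R N] [ContinuousAdd N]
    [ContinuousSMul R N] (f : M →L[R] N) {s : Set M} (hs : (span R s).topologicalClosure = ⊤)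
    {p : Submodule R N} (hf : MapsTo f s p) : LinearMap.range f.toLinearMap ≤ p.topologicalClosure :=
  calc LinearMap.range f.toLinearMap = (span R s).topologicalClosure.map f.toLinearMap := by
        rw [hs, LinearMap.range_eq_map]
    _ ≤ ((span R s).map f.toLinearMap).topologicalClosure := topologicalClosure_map f _
    _ ≤ p.topologicalClosure := topologicalClosure_mono (map_le_iff_le_comap.2 (span_le.2 hf))

theorem AnalyticOnNhd.eventually_nhdsNE_ne_zero {𝕜 E : Type*} [NontriviallyNormedField 𝕜]
    [NormedAddCommGroup E] [NormedSpace 𝕜 E] {f : 𝕜 → E} {U : Set 𝕜} {z : 𝕜}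
    (hf : AnalyticOnNhd 𝕜 f U) (hU : IsPreconnected U) (hf0 : ¬EqOn f 0 U) (hz : z ∈ U) :
    ∀ᶠ w in 𝓝[≠] z, f w ≠ 0 :=
  not_frequently.1 fun h ↦ hf0 (hf.eqOn_zero_of_preconnected_of_frequently_eq_zero hU hz h)

theorem stmt_6_general {H : Type*} [NormedAddCommGroup H] [InnerProductSpace ℂ H]
    [CompleteSpace H]
    {Ω : Set ℂ} (hΩopen : IsOpen Ω) (hΩconn : IsConnected Ω)
    (γ γt : ℂ → H)
    (hγ : DifferentiableOn ℂ γ Ω) (hγt : DifferentiableOn ℂ γt Ω)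
    (hspan : (Submodule.span ℂ (γ '' Ω)).topologicalClosure = ⊤)
    (P : H →L[ℂ] H)
    (hint : ∀ w ∈ Ω, ∃ c : ℂ, P (γ w) = c • γt w)
    (hP : P ≠ 0) :
    (LinearMap.range P.toLinearMap).topologicalClosure
      = (Submodule.span ℂ (γt '' Ω)).topologicalClosure := by
  have hPγ : AnalyticOnNhd ℂ (P ∘ γ) Ω :=
    (P.differentiable.comp_differentiableOn hγ).analyticOnNhd hΩopen
  have hPγ_ne : ¬EqOn (P ∘ γ) 0 Ω := fun h ↦
    hP <| P.ext_on (dense_iff_topologicalClosure_eq_top.2 hspan)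
      fun _ ⟨w, hw, hx⟩ ↦ hx ▸ h hw
  refine le_antisymm (topologicalClosure_minimal _ ?_ (isClosed_topologicalClosure _))
    (topologicalClosure_minimal _ (span_le.2 ?_) (isClosed_topologicalClosure _))
  · refine P.range_le_topologicalClosure_of_dense_span hspan ?_
    rintro _ ⟨w, hw, rfl⟩
    obtain ⟨c, hc⟩ := hint w hw
    exact hc ▸ smul_mem _ c (subset_span ⟨w, hw, rfl⟩)
  · rintro _ ⟨w, hw, rfl⟩
    have hγt_cont : ContinuousAt γt w := (hγt.differentiableAt (hΩopen.mem_nhds hw)).continuousAt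
    refine mem_closure_of_tendsto (hγt_cont.tendsto.mono_left (nhdsWithin_le_nhds (s := {w}ᶜ))) ?_
    filter_upwards [hPγ.eventually_nhdsNE_ne_zero hΩconn.isPreconnected hPγ_ne hw,
      eventually_nhdsWithin_of_eventually_nhds (hΩopen.mem_nhds hw)] with z hz hzΩ
    obtain ⟨c, hc⟩ := hint z hzΩ
    exact P.toLinearMap.mem_range_of_apply_eq_smul hc hz

/-- Let `P` be a bounded operator, `γ, γ̃` non-vanishing holomorphic `H`-valued maps on a
connected open set `Ω`, with the sections `γ(w)` spanning `H`, and suppose that for every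
`w ∈ Ω`, `P γ(w)` is a scalar multiple of `γ̃(w)`.  If `P ≠ 0`, then the range of `P` is
dense in the closed span of `{γ̃(w) : w ∈ Ω}`. -/
theorem stmt_6 {H : Type*} [NormedAddCommGroup H] [InnerProductSpace ℂ H]
    [CompleteSpace H]
    {Ω : Set ℂ} (hΩopen : IsOpen Ω) (hΩconn : IsConnected Ω)
    (γ γt : ℂ → H)
    (hγ : DifferentiableOn ℂ γ Ω) (hγt : DifferentiableOn ℂ γt Ω)
    (hnv : ∀ w ∈ Ω, γ w ≠ 0) (hnvt : ∀ w ∈ Ω, γt w ≠ 0)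
    (hspan : (Submodule.span ℂ (γ '' Ω)).topologicalClosure = ⊤)
    (P : H →L[ℂ] H)
    (hint : ∀ w ∈ Ω, ∃ c : ℂ, P (γ w) = c • γt w)
    (hP : P ≠ 0) :
    (LinearMap.range P.toLinearMap).topologicalClosure
      = (Submodule.span ℂ (γt '' Ω)).topologicalClosure :=
  stmt_6_general hΩopen hΩconn γ γt hγ hγt hspan P hint hP
end

section
/- Let T₀ be the adjoint of the multiplication operator on the weighted Bergman space A^{(λ₀)}(𝔻) and T₁ the adjoint of the multiplication operator on A^{(λ₁)}(𝔻), with λ₁ - λ₀ ≥ 2. Then the operator S₀₁ defined on basis vectors by S₀₁(e_ℓ^{(λ₁)}) = (a_ℓ(λ₁)/a_ℓ(λ₀))^{1/2} · (λ₀)_ℓ/(λ₁)_ℓ · e_ℓ^{(λ₀)} lies in the range of the Rosenblum operator τ_{T₀,T₁}, i.e. there exists a bounded X with T₀X - XT₁ = S₀₁. -/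
open scoped ENNReal NNReal

section aux

/-- `(λ + n + 1) (λ)_{n+1} = λ (λ+1) (λ+2)_n`. -/
lemma poch_succ_id (lam : ℝ) (n : ℕ) :
    (lam + n + 1) * (ascPochhammer ℝ (n + 1)).eval lam
      = lam * (lam + 1) * (ascPochhammer ℝ n).eval (lam + 2) := by
  induction n with
  | zero => simp [ascPochhammer_one]; ring
  | succ n ih =>
    rw [ascPochhammer_succ_eval (n + 1) lam, ascPochhammer_succ_eval n (lam + 2)]
    push_cast
    linear_combination (lam + n + 2) * ih

lemma poch_mono {lam mu : ℝ} (h : 0 < lam) (hle : lam ≤ mu) (n : ℕ) :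
    (ascPochhammer ℝ n).eval lam ≤ (ascPochhammer ℝ n).eval mu := by
  induction n with
  | zero => simp
  | succ n ih =>
    rw [ascPochhammer_succ_eval, ascPochhammer_succ_eval]
    have h1 : (0 : ℝ) < (ascPochhammer ℝ n).eval lam := ascPochhammer_pos n lam h
    have h2 : (0 : ℝ) < lam + n := by positivity
    have h3 : (0 : ℝ) < (ascPochhammer ℝ n).eval mu :=
      ascPochhammer_pos n mu (lt_of_lt_of_le h hle)
    exact mul_le_mul ih (by linarith) (by linarith) h3.le

lemma eq_of_sq_eq' {a b : ℝ} (ha : 0 ≤ a) (hb : 0 ≤ b) (h : a ^ 2 = b ^ 2) : a = b := by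
  rw [← Real.sqrt_sq ha, ← Real.sqrt_sq hb, h]

end aux

/-- Let `T₀, T₁` be the adjoints of multiplication on the weighted Bergman spaces
`A^{(λ₀)}(𝔻)`, `A^{(λ₁)}(𝔻)` (realized as backward weighted shifts on orthonormal
bases `e`, `f` with weights `√((n+1)/(n+λ))`), and `λ₁ - λ₀ ≥ 2`.  Then the
intertwiner `S₀₁` with `S₀₁ f_ℓ = √(a_ℓ(λ₁)/a_ℓ(λ₀)) · (λ₀)_ℓ/(λ₁)_ℓ · e_ℓ`
lies in the range of the Rosenblum operator `τ_{T₀,T₁}`. -/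
theorem stmt_7 {H₀ H₁ : Type*}
    [NormedAddCommGroup H₀] [InnerProductSpace ℂ H₀] [CompleteSpace H₀]
    [NormedAddCommGroup H₁] [InnerProductSpace ℂ H₁] [CompleteSpace H₁]
    (lam₀ lam₁ : ℝ) (h0 : 0 < lam₀) (hgap : 2 ≤ lam₁ - lam₀)
    (e : ℕ → H₀) (f : ℕ → H₁) (he : Orthonormal ℂ e) (hf : Orthonormal ℂ f)
    (hte : (Submodule.span ℂ (Set.range e)).topologicalClosure = ⊤)
    (htf : (Submodule.span ℂ (Set.range f)).topologicalClosure = ⊤)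
    (T₀ : H₀ →L[ℂ] H₀) (T₁ : H₁ →L[ℂ] H₁) (S : H₁ →L[ℂ] H₀)
    (hT₀z : T₀ (e 0) = 0)
    (hT₀ : ∀ n : ℕ, T₀ (e (n + 1)) =
      ((Real.sqrt (((n : ℝ) + 1) / ((n : ℝ) + lam₀)) : ℝ) : ℂ) • e n)
    (hT₁z : T₁ (f 0) = 0)
    (hT₁ : ∀ n : ℕ, T₁ (f (n + 1)) =
      ((Real.sqrt (((n : ℝ) + 1) / ((n : ℝ) + lam₁)) : ℝ) : ℂ) • f n)
    (hS : ∀ l : ℕ, S (f l) =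
      ((Real.sqrt (bergmanCoeff lam₁ l / bergmanCoeff lam₀ l) *
        ((ascPochhammer ℝ l).eval lam₀ / (ascPochhammer ℝ l).eval lam₁) : ℝ) : ℂ) • e l) :
    ∃ X : H₁ →L[ℂ] H₀, T₀ ∘L X - X ∘L T₁ = S := by
  classical
  have h1 : 0 < lam₁ := by linarith
  set P : ℕ → ℝ := fun n => (ascPochhammer ℝ n).eval lam₀ with hPdef
  set Q : ℕ → ℝ := fun n => (ascPochhammer ℝ n).eval lam₁ with hQdef
  have hPpos : ∀ n, 0 < P n := fun n => ascPochhammer_pos n lam₀ h0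
  have hQpos : ∀ n, 0 < Q n := fun n => ascPochhammer_pos n lam₁ h1
  have hPsucc : ∀ n : ℕ, P (n + 1) = P n * (lam₀ + n) := fun n =>
    ascPochhammer_succ_eval n lam₀
  have hQsucc : ∀ n : ℕ, Q (n + 1) = Q n * (lam₁ + n) := fun n =>
    ascPochhammer_succ_eval n lam₁
  -- the weights of X and the coefficients of S
  set x : ℕ → ℝ := fun n => Real.sqrt (((n : ℝ) + 1) * P (n + 1) / Q n) with hxdef
  have hxnn : ∀ n, 0 ≤ x n := fun n => Real.sqrt_nonneg _
  set s : ℕ → ℝ := fun l => Real.sqrt (P l / Q l) with hsdef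
  have hsnn : ∀ l, 0 ≤ s l := fun l => Real.sqrt_nonneg _
  have hxsq : ∀ n, x n ^ 2 = ((n : ℝ) + 1) * P (n + 1) / Q n := by
    intro n
    refine Real.sq_sqrt ?_
    have := hPpos (n + 1); have := hQpos n; positivity
  have hssq : ∀ l, s l ^ 2 = P l / Q l := by
    intro l
    refine Real.sq_sqrt ?_
    have := hPpos l; have := hQpos l; positivity
  -- the coefficient in `hS` equals `s l`
  have hScoef : ∀ l : ℕ,
      Real.sqrt (bergmanCoeff lam₁ l / bergmanCoeff lam₀ l) * (P l / Q l) = s l := by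
    intro l
    have hPl := hPpos l; have hQl := hQpos l
    have hP' : Polynomial.eval lam₀ (ascPochhammer ℝ l) ≠ 0 :=
      (ascPochhammer_pos l lam₀ h0).ne'
    have hQ' : Polynomial.eval lam₁ (ascPochhammer ℝ l) ≠ 0 :=
      (ascPochhammer_pos l lam₁ h1).ne'
    have hfac : ((l.factorial : ℝ)) ≠ 0 := by positivity
    have hb1 : bergmanCoeff lam₁ l / bergmanCoeff lam₀ l = Q l / P l := by
      simp only [hPdef, hQdef, bergmanCoeff]
      field_simp
    rw [hb1]
    refine eq_of_sq_eq' ?_ (hsnn l) ?_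
    · have : (0 : ℝ) ≤ P l / Q l := by positivity
      exact mul_nonneg (Real.sqrt_nonneg _) this
    · rw [mul_pow, Real.sq_sqrt (by positivity : (0:ℝ) ≤ Q l / P l), hssq]
      rw [div_pow]
      field_simp
  -- uniform bound on the weights
  set C : ℝ := Real.sqrt (lam₀ * (lam₀ + 1)) with hCdef
  have hCnn : 0 ≤ C := Real.sqrt_nonneg _
  have hxle : ∀ n, x n ≤ C := by
    intro n
    rw [hxdef, hCdef]
    apply Real.sqrt_le_sqrt
    rw [div_le_iff₀ (hQpos n)]
    have hid := poch_succ_id lam₀ n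
    have hmono := poch_mono (by linarith : (0:ℝ) < lam₀ + 2) (by linarith : lam₀ + 2 ≤ lam₁) n
    have hR : 0 < (ascPochhammer ℝ n).eval (lam₀ + 2) :=
      ascPochhammer_pos n _ (by linarith)
    have hP1 := hPpos (n + 1)
    have hid' : (lam₀ + (n : ℝ) + 1) * P (n + 1)
        = lam₀ * (lam₀ + 1) * (ascPochhammer ℝ n).eval (lam₀ + 2) := hid
    have hmono' : (ascPochhammer ℝ n).eval (lam₀ + 2) ≤ Q n := hmono
    have hll : (0 : ℝ) < lam₀ * (lam₀ + 1) := by nlinarith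
    have h4 := mul_le_mul_of_nonneg_left hmono' hll.le
    linarith [mul_pos h0 hP1]
  -- key scalar identities
  have key1 : ∀ n : ℕ, x n * Real.sqrt (((n : ℝ) + 1) / ((n : ℝ) + lam₀))
      = ((n : ℝ) + 1) * s n := by
    intro n
    have hn0 : (0 : ℝ) < (n : ℝ) + lam₀ := by positivity
    refine eq_of_sq_eq' (mul_nonneg (hxnn n) (Real.sqrt_nonneg _)) ?_ ?_
    · exact mul_nonneg (by positivity) (hsnn n)
    · rw [mul_pow, mul_pow, hxsq, hssq, Real.sq_sqrt (by positivity)]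
      rw [hPsucc n]
      have := hQpos n
      field_simp
      ring
  have key2 : ∀ n : ℕ, Real.sqrt (((n : ℝ) + 1) / ((n : ℝ) + lam₁)) * x n
      = ((n : ℝ) + 1) * s (n + 1) := by
    intro n
    have hn1 : (0 : ℝ) < (n : ℝ) + lam₁ := by positivity
    refine eq_of_sq_eq' (mul_nonneg (Real.sqrt_nonneg _) (hxnn n)) ?_ ?_
    · exact mul_nonneg (by positivity) (hsnn (n + 1))
    · rw [mul_pow, mul_pow, hxsq, hssq, Real.sq_sqrt (by positivity)]
      rw [hQsucc n]
      have := hQpos n; have := hPpos (n + 1)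
      field_simp
      ring
  -- construction of the operator X
  set g : ℕ → ℂ := fun n => ((x n : ℝ) : ℂ) with hgdef
  have hgnorm : ∀ n, ‖g n‖ = x n := by
    intro n; rw [hgdef]; simp [Complex.norm_real, abs_of_nonneg (hxnn n)]
  let b : HilbertBasis ℕ ℂ H₁ := HilbertBasis.mk hf (le_of_eq htf.symm)
  have hb : ∀ n, b n = f n := fun n => congrFun (HilbertBasis.coe_mk hf _) n
  have he' : Orthonormal ℂ (fun n : ℕ => e (n + 1)) :=
    he.comp _ (fun a b h => by omega)
  let J : lp (fun _ : ℕ => ℂ) 2 →ₗᵢ[ℂ] H₀ := he'.orthogonalFamily.linearIsometry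
  have hJsingle : ∀ (i : ℕ) (c : ℂ), J (lp.single 2 i c) = c • e (i + 1) := by
    intro i c
    rw [OrthogonalFamily.linearIsometry_apply_single]
    exact LinearIsometry.toSpanSingleton_apply _ _
  have htwo : (0 : ℝ) < (2 : ℝ≥0∞).toReal := by norm_num
  have hmem : ∀ c : lp (fun _ : ℕ => ℂ) 2, Memℓp (fun n => g n * c n) 2 := by
    intro c
    apply memℓp_gen
    have hsum := (lp.memℓp c).summable htwo
    refine Summable.of_nonneg_of_le (fun n => by positivity) (fun n => ?_)
      (hsum.mul_left (C ^ (2 : ℝ≥0∞).toReal))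
    calc ‖g n * c n‖ ^ (2 : ℝ≥0∞).toReal
        = (‖g n‖ * ‖c n‖) ^ (2 : ℝ≥0∞).toReal := by rw [norm_mul]
      _ = ‖g n‖ ^ (2 : ℝ≥0∞).toReal * ‖c n‖ ^ (2 : ℝ≥0∞).toReal :=
          Real.mul_rpow (norm_nonneg _) (norm_nonneg _)
      _ ≤ C ^ (2 : ℝ≥0∞).toReal * ‖c n‖ ^ (2 : ℝ≥0∞).toReal := by
          gcongr
          · rw [hgnorm]; exact hxle n
  let Dl : lp (fun _ : ℕ => ℂ) 2 →ₗ[ℂ] lp (fun _ : ℕ => ℂ) 2 :=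
    { toFun := fun c => ⟨fun n => g n * c n, hmem c⟩
      map_add' := fun c d => by
        apply lp.ext
        funext n
        simp only [lp.coeFn_add, Pi.add_apply]
        change g n * (c n + d n) = g n * c n + g n * d n
        ring
      map_smul' := fun a c => by
        apply lp.ext
        funext n
        simp only [lp.coeFn_smul, Pi.smul_apply, RingHom.id_apply]
        change g n * (a • c n) = a • (g n * c n)
        simp [smul_eq_mul]; ring }
  have hDlnorm : ∀ c, ‖Dl c‖ ≤ C * ‖c‖ := by
    intro c
    apply lp.norm_le_of_forall_sum_le htwo (mul_nonneg hCnn (norm_nonneg _))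
    intro sfin
    calc ∑ i ∈ sfin, ‖(Dl c) i‖ ^ (2 : ℝ≥0∞).toReal
        ≤ ∑ i ∈ sfin, C ^ (2 : ℝ≥0∞).toReal * ‖c i‖ ^ (2 : ℝ≥0∞).toReal := by
          apply Finset.sum_le_sum
          intro i _
          have : ‖(Dl c) i‖ = ‖g i * c i‖ := rfl
          rw [this, norm_mul, Real.mul_rpow (norm_nonneg _) (norm_nonneg _)]
          gcongr
          · rw [hgnorm]; exact hxle i
      _ = C ^ (2 : ℝ≥0∞).toReal * ∑ i ∈ sfin, ‖c i‖ ^ (2 : ℝ≥0∞).toReal := by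
          rw [Finset.mul_sum]
      _ ≤ C ^ (2 : ℝ≥0∞).toReal * ‖c‖ ^ (2 : ℝ≥0∞).toReal := by
          gcongr
          · exact lp.sum_rpow_le_norm_rpow htwo c sfin
      _ = (C * ‖c‖) ^ (2 : ℝ≥0∞).toReal :=
          (Real.mul_rpow hCnn (norm_nonneg _)).symm
  let D : lp (fun _ : ℕ => ℂ) 2 →L[ℂ] lp (fun _ : ℕ => ℂ) 2 :=
    Dl.mkContinuous C hDlnorm
  let X : H₁ →L[ℂ] H₀ :=
    J.toContinuousLinearMap ∘L D ∘L (b.repr : H₁ ≃ₗᵢ[ℂ] lp (fun _ : ℕ => ℂ) 2).toLinearIsometry.toContinuousLinearMap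
  have hXf : ∀ l : ℕ, X (f l) = g l • e (l + 1) := by
    intro l
    have h1 : b.repr (f l) = lp.single 2 l 1 := by
      rw [← hb l]; exact b.repr_self l
    have h2 : D (lp.single 2 l 1) = lp.single 2 l (g l) := by
      apply lp.ext
      funext n
      change g n * (lp.single 2 l (1 : ℂ) : ∀ _ : ℕ, ℂ) n
        = (lp.single 2 l (g l) : ∀ _ : ℕ, ℂ) n
      rw [lp.single_apply, lp.single_apply]
      by_cases h : n = l
      · subst h; simp
      · simp [h]
    show J (D (b.repr (f l))) = g l • e (l + 1)
    rw [h1, h2, hJsingle]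
  refine ⟨X, ?_⟩
  apply ContinuousLinearMap.ext_on
    (Submodule.dense_iff_topologicalClosure_eq_top.mpr htf)
  rintro - ⟨l, rfl⟩
  simp only [ContinuousLinearMap.sub_apply, ContinuousLinearMap.comp_apply]
  rw [hXf l, hS l, hScoef l, map_smul, hT₀ l]
  cases l with
  | zero =>
    rw [hT₁z, map_zero, sub_zero, smul_smul]
    congr 1
    rw [hgdef]
    have := key1 0
    push_cast at this ⊢
    rw [← Complex.ofReal_mul, this]
    norm_num
  | succ m =>
    rw [hT₁ m, map_smul, hXf m, smul_smul, smul_smul, ← sub_smul]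
    congr 1
    rw [hgdef]
    have hk1 := key1 (m + 1)
    have hk2 := key2 m
    push_cast at hk1 hk2 ⊢
    rw [← Complex.ofReal_mul, ← Complex.ofReal_mul, ← Complex.ofReal_sub]
    congr 1
    rw [hk1, hk2]
    ring
end

section
/- Let T₀, T₁ be backward weighted shifts on Hilbert spaces H₀, H₁ with orthonormal bases (e_n), (f_n): T₀ e_n = u_{n-1} e_{n-1}, T₁ f_n = v_{n-1} f_{n-1}, with weights u_n = √((n+1)/(n+λ₀)), v_n = √((n+1)/(n+λ₁)), λ₁ > λ₀ > 0. If λ₁ - λ₀ < 2, then there is no bounded operator X with T₀X - XT₁ = S, where S f_n = s_n e_n, s_n = √(a_n(λ₀)/a_n(λ₁)). -/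
/-! Let `y_n = ⟪e_{n+1}, X f_n⟫` be the subdiagonal entries of `X`. Pairing `T₀X - XT₁ = S`
applied to `f_{n+1}` with `e_{n+1}` gives `u_{n+1} y_{n+1} = s_{n+1} + v_n y_n`, and since `S`
intertwines the two shifts (`u_n s_{n+1} = v_n s_n`) this recursion forces `u_n y_n = (n+1) s_n`.
Hence `|y_n|² = (n+1)(n+λ₀) a_n(λ₀)/a_n(λ₁)`, a sequence whose consecutive ratios are at least
`1 + (λ₀ + 2 - λ₁)/(n + λ₁)`; for `λ₁ - λ₀ < 2` the divergence of the harmonic series makes it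
unbounded, whereas `|y_n| ≤ ‖X‖`. -/

open Filter
open scoped InnerProductSpace

lemma bergmanCoeff_pos {lam : ℝ} (h : 0 < lam) (n : ℕ) : 0 < bergmanCoeff lam n :=
  div_pos (ascPochhammer_pos n lam h) (by positivity)

lemma bergmanCoeff_succ (lam : ℝ) (n : ℕ) :
    bergmanCoeff lam (n + 1) = bergmanCoeff lam n * (lam + n) / (n + 1) := by
  unfold bergmanCoeff
  rw [ascPochhammer_succ_eval, Nat.factorial_succ]
  push_cast
  field_simp

lemma tendsto_sum_range_one_div_add_atTop {L : ℝ} (hL : 0 < L) :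
    Tendsto (fun n : ℕ => ∑ k ∈ Finset.range n, 1 / ((k : ℝ) + L)) atTop atTop := by
  refine (not_summable_iff_tendsto_nat_atTop_of_nonneg fun k => by positivity).mp ?_
  have h := (Real.summable_one_div_nat_add_rpow L 1).not.mpr (lt_irrefl 1)
  convert h using 3 with k
  rw [Real.rpow_one, abs_of_pos (by positivity)]

lemma tendsto_atTop_of_mul_one_add_div_le {G : ℕ → ℝ} {c L : ℝ} (hc : 0 < c) (hL : 0 < L)
    (hG₀ : 0 < G 0) (hG : ∀ n : ℕ, G n * (1 + c / (n + L)) ≤ G (n + 1)) :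
    Tendsto G atTop atTop := by
  have hlower : ∀ n : ℕ, G 0 * (1 + c * ∑ k ∈ Finset.range n, 1 / ((k : ℝ) + L)) ≤ G n := by
    intro n
    induction n with
    | zero => simp
    | succ n ih =>
      have hGn : G 0 ≤ G n :=
        (le_mul_of_one_le_right hG₀.le (le_add_of_nonneg_right (by positivity))).trans ih
      have hstep : G n + c * G 0 / (n + L) ≤ G (n + 1) := by
        calc G n + c * G 0 / (n + L) ≤ G n + c * G n / (n + L) := by gcongr
          _ = G n * (1 + c / (n + L)) := by ring
          _ ≤ G (n + 1) := hG n
      rw [Finset.sum_range_succ]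
      calc G 0 * (1 + c * (∑ k ∈ Finset.range n, 1 / ((k : ℝ) + L) + 1 / (n + L)))
          = G 0 * (1 + c * ∑ k ∈ Finset.range n, 1 / ((k : ℝ) + L)) + c * G 0 / (n + L) := by
            ring
        _ ≤ G (n + 1) := by linarith
  refine tendsto_atTop_mono hlower ?_
  exact (tendsto_atTop_add_const_left _ 1
    ((tendsto_sum_range_one_div_add_atTop hL).const_mul_atTop hc)).const_mul_atTop hG₀

section Bergman

variable {lam₀ lam₁ : ℝ}

lemma tendsto_bergmanCoeff_ratio (h0 : 0 < lam₀) (h1 : 0 < lam₁) (hgap : lam₁ - lam₀ < 2) :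
    Tendsto (fun n : ℕ => (n + 1) * (n + lam₀) * (bergmanCoeff lam₀ n / bergmanCoeff lam₁ n))
      atTop atTop := by
  refine tendsto_atTop_of_mul_one_add_div_le (c := lam₀ + 2 - lam₁) (by linarith) h1
    (by simpa [bergmanCoeff] using h0) fun n => ?_
  have ha₀ := bergmanCoeff_pos h0 n
  have ha₁ := bergmanCoeff_pos h1 n
  rw [bergmanCoeff_succ, bergmanCoeff_succ, ← sub_nonneg]
  push_cast
  -- the excess is `λ₀ / ((n + 1)(n + λ₁))` times the `n`-th term
  have hexcess :
      0 ≤ bergmanCoeff lam₀ n / bergmanCoeff lam₁ n * lam₀ * (n + lam₀) / (n + lam₁) := by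
    positivity
  convert hexcess using 1
  field_simp
  ring

lemma sqrt_bergmanCoeff_intertwine (h0 : 0 < lam₀) (h1 : 0 < lam₁) (n : ℕ) :
    √((n + 1) / (n + lam₀)) * √(bergmanCoeff lam₀ (n + 1) / bergmanCoeff lam₁ (n + 1)) =
      √((n + 1) / (n + lam₁)) * √(bergmanCoeff lam₀ n / bergmanCoeff lam₁ n) := by
  rw [← Real.sqrt_mul (by positivity), ← Real.sqrt_mul (by positivity), bergmanCoeff_succ,
    bergmanCoeff_succ]
  have ha₁ := (bergmanCoeff_pos h1 n).ne'
  congr 1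
  field_simp
  ring

end Bergman

section WeightedShift

variable {𝕜 E F : Type*} [RCLike 𝕜] [NormedAddCommGroup E] [InnerProductSpace 𝕜 E]
  [NormedAddCommGroup F] [InnerProductSpace 𝕜 F]

lemma inner_apply_of_backwardShift {e : ℕ → E} (he : Orthonormal 𝕜 e)
    (hdense : (Submodule.span 𝕜 (Set.range e)).topologicalClosure = ⊤) {T : E →L[𝕜] E}
    {w : ℕ → 𝕜} (hT0 : T (e 0) = 0) (hT : ∀ n, T (e (n + 1)) = w n • e n) (ℓ : ℕ) (z : E) :
    ⟪e ℓ, T z⟫_𝕜 = w ℓ * ⟪e (ℓ + 1), z⟫_𝕜 := by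
  suffices (innerSL 𝕜 (e ℓ)).comp T = w ℓ • innerSL 𝕜 (e (ℓ + 1)) by
    simpa using congr($this z)
  refine ContinuousLinearMap.ext_on
    (Submodule.dense_iff_topologicalClosure_eq_top.mpr hdense) ?_
  rintro _ ⟨m, rfl⟩
  rw [orthonormal_iff_ite] at he
  cases m with
  | zero => simp [hT0, he]
  | succ k =>
    simp only [ContinuousLinearMap.comp_apply, innerSL_apply_apply, hT, inner_smul_right, he,
      smul_apply, smul_eq_mul, add_left_inj]
    split_ifs with h <;> simp [h]

variable {e : ℕ → E} {f : ℕ → F} {T₀ : E →L[𝕜] E} {T₁ : F →L[𝕜] F} {S X : F →L[𝕜] E}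
  {u v s : ℕ → 𝕜}

lemma mul_inner_succ_eq_of_commutator_eq (he : Orthonormal 𝕜 e)
    (hdense : (Submodule.span 𝕜 (Set.range e)).topologicalClosure = ⊤)
    (hT₀z : T₀ (e 0) = 0) (hT₀ : ∀ n, T₀ (e (n + 1)) = u n • e n)
    (hT₁z : T₁ (f 0) = 0) (hT₁ : ∀ n, T₁ (f (n + 1)) = v n • f n)
    (hS : ∀ n, S (f n) = s n • e n) (hX : T₀ ∘L X - X ∘L T₁ = S)
    (hu : ∀ n, u n ≠ 0) (hint : ∀ n, u n * s (n + 1) = v n * s n) (n : ℕ) :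
    u n * ⟪e (n + 1), X (f n)⟫_𝕜 = (n + 1) * s n := by
  have hentry : ∀ n, ⟪e n, T₀ (X (f n))⟫_𝕜 - ⟪e n, X (T₁ (f n))⟫_𝕜 = s n := by
    intro n
    have := congr($hX (f n))
    simp only [sub_apply, ContinuousLinearMap.comp_apply, hS] at this
    simp [← inner_sub_right, this, inner_smul_right, inner_self_eq_norm_sq_to_K, he.1 n]
  induction n with
  | zero =>
    simpa [inner_apply_of_backwardShift he hdense hT₀z hT₀, hT₁z] using hentry 0
  | succ n ih =>
    have hrec := hentry (n + 1)
    rw [inner_apply_of_backwardShift he hdense hT₀z hT₀, hT₁, map_smul, inner_smul_right] at hrec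
    refine mul_left_cancel₀ (hu n) ?_
    push_cast
    linear_combination u n * hrec + v n * ih - (n + 1) * hint n

end WeightedShift

theorem stmt_8_general {H₀ H₁ : Type*}
    [NormedAddCommGroup H₀] [InnerProductSpace ℂ H₀]
    [NormedAddCommGroup H₁] [InnerProductSpace ℂ H₁]
    (lam₀ lam₁ : ℝ) (h0 : 0 < lam₀) (h01 : lam₀ < lam₁) (hgap : lam₁ - lam₀ < 2)
    (e : ℕ → H₀) (f : ℕ → H₁) (he : Orthonormal ℂ e) (hf : Orthonormal ℂ f)
    (hte : (Submodule.span ℂ (Set.range e)).topologicalClosure = ⊤)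
    (T₀ : H₀ →L[ℂ] H₀) (T₁ : H₁ →L[ℂ] H₁) (S : H₁ →L[ℂ] H₀)
    (hT₀z : T₀ (e 0) = 0)
    (hT₀ : ∀ n : ℕ, T₀ (e (n + 1)) =
      ((Real.sqrt (((n : ℝ) + 1) / ((n : ℝ) + lam₀)) : ℝ) : ℂ) • e n)
    (hT₁z : T₁ (f 0) = 0)
    (hT₁ : ∀ n : ℕ, T₁ (f (n + 1)) =
      ((Real.sqrt (((n : ℝ) + 1) / ((n : ℝ) + lam₁)) : ℝ) : ℂ) • f n)
    (hS : ∀ n : ℕ, S (f n) =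
      ((Real.sqrt (bergmanCoeff lam₀ n / bergmanCoeff lam₁ n) : ℝ) : ℂ) • e n) :
    ¬ ∃ X : H₁ →L[ℂ] H₀, T₀ ∘L X - X ∘L T₁ = S := by
  rintro ⟨X, hX⟩
  have h1 : 0 < lam₁ := h0.trans h01
  have hentry (n : ℕ) :
      √((n + 1) / (n + lam₀)) * ‖⟪e (n + 1), X (f n)⟫_ℂ‖ =
        (n + 1) * √(bergmanCoeff lam₀ n / bergmanCoeff lam₁ n) := by
    have := mul_inner_succ_eq_of_commutator_eq he hte hT₀z hT₀ hT₁z hT₁ hS hX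
      (fun n => Complex.ofReal_ne_zero.mpr (Real.sqrt_pos.mpr (by positivity)).ne')
      (fun n => by exact_mod_cast sqrt_bergmanCoeff_intertwine h0 h1 n) n
    have hnorm : ‖(n + 1 : ℂ)‖ = n + 1 := by exact_mod_cast Complex.norm_natCast (n + 1)
    simpa [hnorm, abs_of_nonneg, Real.sqrt_nonneg] using congr(‖$this‖)
  have hbound (n : ℕ) :
      (n + 1) * (n + lam₀) * (bergmanCoeff lam₀ n / bergmanCoeff lam₁ n) ≤ ‖X‖ ^ 2 := by
    have hle : ‖⟪e (n + 1), X (f n)⟫_ℂ‖ ≤ ‖X‖ :=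
      (norm_inner_le_norm _ _).trans (by simpa [he.1, hf.1] using X.le_opNorm (f n))
    have hsq := pow_le_pow_left₀ (by positivity)
      ((hentry n).symm.le.trans (mul_le_mul_of_nonneg_left hle (Real.sqrt_nonneg _))) 2
    have hratio : 0 ≤ bergmanCoeff lam₀ n / bergmanCoeff lam₁ n :=
      div_nonneg (bergmanCoeff_pos h0 n).le (bergmanCoeff_pos h1 n).le
    rw [mul_pow, mul_pow, Real.sq_sqrt hratio, Real.sq_sqrt (by positivity)] at hsq
    have hn : (0 : ℝ) < n + 1 := by positivity
    refine le_of_mul_le_mul_left ?_ (div_pos hn (by positivity : (0 : ℝ) < n + lam₀))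
    convert hsq using 1
    field_simp
  obtain ⟨n, hn⟩ :=
    ((tendsto_bergmanCoeff_ratio h0 h1 hgap).eventually_gt_atTop (‖X‖ ^ 2)).exists
  exact (hbound n).not_gt hn

/-- Let `T₀, T₁` be backward weighted shifts with weights `u_n = √((n+1)/(n+λ₀))`,
`v_n = √((n+1)/(n+λ₁))`, `λ₁ > λ₀ > 0`.  If `λ₁ - λ₀ < 2`, then there is no bounded
operator `X` with `T₀X - XT₁ = S`, where `S f_n = √(a_n(λ₀)/a_n(λ₁)) e_n`. -/
theorem stmt_8 {H₀ H₁ : Type*}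
    [NormedAddCommGroup H₀] [InnerProductSpace ℂ H₀] [CompleteSpace H₀]
    [NormedAddCommGroup H₁] [InnerProductSpace ℂ H₁] [CompleteSpace H₁]
    (lam₀ lam₁ : ℝ) (h0 : 0 < lam₀) (h01 : lam₀ < lam₁) (hgap : lam₁ - lam₀ < 2)
    (e : ℕ → H₀) (f : ℕ → H₁) (he : Orthonormal ℂ e) (hf : Orthonormal ℂ f)
    (hte : (Submodule.span ℂ (Set.range e)).topologicalClosure = ⊤)
    (htf : (Submodule.span ℂ (Set.range f)).topologicalClosure = ⊤)
    (T₀ : H₀ →L[ℂ] H₀) (T₁ : H₁ →L[ℂ] H₁) (S : H₁ →L[ℂ] H₀)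
    (hT₀z : T₀ (e 0) = 0)
    (hT₀ : ∀ n : ℕ, T₀ (e (n + 1)) =
      ((Real.sqrt (((n : ℝ) + 1) / ((n : ℝ) + lam₀)) : ℝ) : ℂ) • e n)
    (hT₁z : T₁ (f 0) = 0)
    (hT₁ : ∀ n : ℕ, T₁ (f (n + 1)) =
      ((Real.sqrt (((n : ℝ) + 1) / ((n : ℝ) + lam₁)) : ℝ) : ℂ) • f n)
    (hS : ∀ n : ℕ, S (f n) =
      ((Real.sqrt (bergmanCoeff lam₀ n / bergmanCoeff lam₁ n) : ℝ) : ℂ) • e n) :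
    ¬ ∃ X : H₁ →L[ℂ] H₀, T₀ ∘L X - X ∘L T₁ = S :=
  stmt_8_general lam₀ lam₁ h0 h01 hgap e f he hf hte T₀ T₁ S hT₀z hT₀ hT₁z hT₁ hS
end

section
/- Let T = [[T₀, S₀₁],[0, T₁]] be a 2×2 upper-triangular bounded operator block with T₀S₀₁ = S₀₁T₁. If S₀₁ does not belong to the range of the Rosenblum operator τ_{T₀,T₁}, and the only idempotents commuting with T₀ (resp. T₁) are 0 and I, then T is strongly irreducible: the only idempotents in the commutant of T are 0 and I. -/
/-- Let `T = [[T₀, S₀₁],[0, T₁]]` with `T₀S₀₁ = S₀₁T₁`.  If `S₀₁` is not in the range of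
the Rosenblum operator `τ_{T₀,T₁}`, the only idempotents commuting with `T₀` (resp. `T₁`)
are `0` and `I`, and every operator commuting with `T` is upper triangular, then `T` is
strongly irreducible: the only idempotents in the commutant of `T` are `0` and `I`. -/
theorem stmt_9 {H₀ H₁ : Type*}
    [NormedAddCommGroup H₀] [InnerProductSpace ℂ H₀] [CompleteSpace H₀]
    [NormedAddCommGroup H₁] [InnerProductSpace ℂ H₁] [CompleteSpace H₁]
    (T₀ : H₀ →L[ℂ] H₀) (T₁ : H₁ →L[ℂ] H₁) (S₀₁ : H₁ →L[ℂ] H₀)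
    (hint : T₀ ∘L S₀₁ = S₀₁ ∘L T₁)
    (hnotran : ¬ ∃ X : H₁ →L[ℂ] H₀, T₀ ∘L X - X ∘L T₁ = S₀₁)
    (hirr₀ : ∀ Q : H₀ →L[ℂ] H₀, Q ∘L T₀ = T₀ ∘L Q → Q ∘L Q = Q → Q = 0 ∨ Q = 1)
    (hirr₁ : ∀ Q : H₁ →L[ℂ] H₁, Q ∘L T₁ = T₁ ∘L Q → Q ∘L Q = Q → Q = 0 ∨ Q = 1)
    (T : (H₀ × H₁) →L[ℂ] (H₀ × H₁))
    (hT : ∀ (x : H₀) (y : H₁), T (x, y) = (T₀ x + S₀₁ y, T₁ y))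
    (hut : ∀ P : (H₀ × H₁) →L[ℂ] (H₀ × H₁), P ∘L T = T ∘L P →
      ∀ x : H₀, (P (x, 0)).2 = 0) :
    ∀ P : (H₀ × H₁) →L[ℂ] (H₀ × H₁), P ∘L T = T ∘L P → P ∘L P = P →
      P = 0 ∨ P = 1 := by
  intro P hPT hPP
  -- block entries of P
  set P₀₀ : H₀ →L[ℂ] H₀ :=
    (ContinuousLinearMap.fst ℂ H₀ H₁) ∘L P ∘L (ContinuousLinearMap.inl ℂ H₀ H₁) with hP00
  set P₀₁ : H₁ →L[ℂ] H₀ :=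
    (ContinuousLinearMap.fst ℂ H₀ H₁) ∘L P ∘L (ContinuousLinearMap.inr ℂ H₀ H₁) with hP01
  set P₁₁ : H₁ →L[ℂ] H₁ :=
    (ContinuousLinearMap.snd ℂ H₀ H₁) ∘L P ∘L (ContinuousLinearMap.inr ℂ H₀ H₁) with hP11
  have hlow : ∀ x : H₀, (P (x, 0)).2 = 0 := hut P hPT
  have hPx0 : ∀ x : H₀, P (x, 0) = (P₀₀ x, 0) := by
    intro x
    have := hlow x
    simp only [hP00, ContinuousLinearMap.comp_apply, ContinuousLinearMap.coe_fst',
      ContinuousLinearMap.inl_apply]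
    exact Prod.ext rfl this
  have hP0y : ∀ y : H₁, P (0, y) = (P₀₁ y, P₁₁ y) := by
    intro y
    simp [hP01, hP11]
  have hPxy : ∀ (x : H₀) (y : H₁), P (x, y) = (P₀₀ x + P₀₁ y, P₁₁ y) := by
    intro x y
    have : P (x, y) = P (x, 0) + P (0, y) := by
      rw [← map_add]; norm_num
    rw [this, hPx0, hP0y]
    simp [Prod.add_def]
  -- commutation relations
  have hcT : ∀ v : H₀ × H₁, P (T v) = T (P v) := by
    intro v
    have := congrArg (fun (A : (H₀ × H₁) →L[ℂ] (H₀ × H₁)) => A v) hPT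
    simpa using this
  have hcomm0 : P₀₀ ∘L T₀ = T₀ ∘L P₀₀ := by
    ext x
    have h := hcT (x, 0)
    rw [hT x 0] at h
    simp only [map_zero, add_zero] at h
    rw [hPx0, hPx0 x, hT] at h
    simp only [map_zero, add_zero] at h
    have := congrArg Prod.fst h
    simpa using this
  have hcomm1 : P₁₁ ∘L T₁ = T₁ ∘L P₁₁ := by
    ext y
    have h := hcT (0, y)
    rw [hT 0 y] at h
    simp only [map_zero, zero_add] at h
    rw [hPxy, hP0y, hT] at h
    have := congrArg Prod.snd h
    simpa using this
  have hcross : ∀ y : H₁, P₀₀ (S₀₁ y) + P₀₁ (T₁ y) = T₀ (P₀₁ y) + S₀₁ (P₁₁ y) := by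
    intro y
    have h := hcT (0, y)
    rw [hT 0 y] at h
    simp only [map_zero, zero_add] at h
    rw [hPxy, hP0y, hT] at h
    have := congrArg Prod.fst h
    simpa using this
  -- idempotency relations
  have hPPv : ∀ v : H₀ × H₁, P (P v) = P v := by
    intro v
    have := congrArg (fun (A : (H₀ × H₁) →L[ℂ] (H₀ × H₁)) => A v) hPP
    simpa using this
  have hid0 : P₀₀ ∘L P₀₀ = P₀₀ := by
    ext x
    have h := hPPv (x, 0)
    rw [hPx0, hPx0] at h
    have := congrArg Prod.fst h
    simpa using this
  have hid1 : P₁₁ ∘L P₁₁ = P₁₁ := by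
    ext y
    have h := hPPv (0, y)
    rw [hP0y, hPxy] at h
    have := congrArg Prod.snd h
    simpa using this
  have hid01 : ∀ y : H₁, P₀₀ (P₀₁ y) + P₀₁ (P₁₁ y) = P₀₁ y := by
    intro y
    have h := hPPv (0, y)
    rw [hP0y, hPxy] at h
    have := congrArg Prod.fst h
    simpa using this
  rcases hirr₀ P₀₀ hcomm0 hid0 with h0 | h0 <;>
    rcases hirr₁ P₁₁ hcomm1 hid1 with h1 | h1
  · -- P₀₀ = 0, P₁₁ = 0 : P₀₁ = 0 from hid01, P = 0
    left
    apply ContinuousLinearMap.ext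
    rintro ⟨x, y⟩
    have hz : P₀₁ y = 0 := by
      have := hid01 y
      rw [h0, h1] at this
      simpa using this.symm
    rw [hPxy, h0, h1, hz]
    simp
  · -- P₀₀ = 0, P₁₁ = 1 : τ(-P₀₁) = S₀₁, contradiction
    exfalso
    apply hnotran
    refine ⟨-P₀₁, ?_⟩
    ext y
    have := hcross y
    rw [h0, h1] at this
    simp only [ContinuousLinearMap.zero_apply, zero_add, ContinuousLinearMap.one_apply] at this
    simp only [ContinuousLinearMap.sub_apply, ContinuousLinearMap.comp_apply,
      ContinuousLinearMap.neg_apply, map_neg]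
    rw [this]; abel
  · -- P₀₀ = 1, P₁₁ = 0 : τ(P₀₁) = S₀₁, contradiction
    exfalso
    apply hnotran
    refine ⟨P₀₁, ?_⟩
    ext y
    have := hcross y
    rw [h0, h1] at this
    simp only [ContinuousLinearMap.one_apply, ContinuousLinearMap.zero_apply, map_zero,
      add_zero] at this
    simp only [ContinuousLinearMap.sub_apply, ContinuousLinearMap.comp_apply]
    rw [← this]; abel
  · -- P₀₀ = 1, P₁₁ = 1 : P₀₁ = 0, P = 1
    right
    apply ContinuousLinearMap.ext
    rintro ⟨x, y⟩
    have hz : P₀₁ y = 0 := by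
      have h2 := hid01 y
      rw [h0, h1] at h2
      simp only [ContinuousLinearMap.one_apply] at h2
      exact add_eq_right.mp h2
    rw [hPxy, h0, h1, hz]
    simp
end

section
/- Let λ₀ > 0, λ₁ = λ₀ + Λ with 0 < Λ, Λ ≠ 2, and set h₀(w) = (1-|w|²)^{-λ₀}, h₁(w) = (1-|w|²)^{-λ₁}, G(w) = λ₀(1-|w|²)^{-2}. Suppose μ, μ̃ ∈ ℂ \ {0} satisfy μ̃ (h₁/h₀ + |μ|² G)^{1/2} = μ (h₁/h₀ + |μ̃|² G)^{1/2} as functions on 𝔻. Then μ = μ̃. -/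
/-- Let `λ₀ > 0`, `λ₁ = λ₀ + Λ` with `0 < Λ`, `Λ ≠ 2`, and set
`h₀(w) = (1-|w|²)^{-λ₀}`, `h₁(w) = (1-|w|²)^{-λ₁}`, `G(w) = λ₀(1-|w|²)^{-2}`.
If nonzero `μ, μ̃ ∈ ℂ` satisfy
`μ̃ √(h₁/h₀ + |μ|² G) = μ √(h₁/h₀ + |μ̃|² G)` on the disc, then `μ = μ̃`. -/
theorem stmt_13 (lam₀ Lam : ℝ) (h0 : 0 < lam₀) (hL : 0 < Lam) (hL2 : Lam ≠ 2)
    (μ μt : ℂ) (hμ : μ ≠ 0) (hμt : μt ≠ 0)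
    (heq : ∀ w : ℂ, ‖w‖ < 1 →
      μt * ((Real.sqrt ((1 - ‖w‖ ^ 2) ^ (-(lam₀ + Lam)) / (1 - ‖w‖ ^ 2) ^ (-lam₀)
              + ‖μ‖ ^ 2 * (lam₀ * (1 - ‖w‖ ^ 2) ^ (-(2 : ℝ)))) : ℝ) : ℂ)
        = μ * ((Real.sqrt ((1 - ‖w‖ ^ 2) ^ (-(lam₀ + Lam)) / (1 - ‖w‖ ^ 2) ^ (-lam₀)
              + ‖μt‖ ^ 2 * (lam₀ * (1 - ‖w‖ ^ 2) ^ (-(2 : ℝ)))) : ℝ) : ℂ)) :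
    μ = μt := by
  have h := heq 0 (by norm_num)
  simp only [norm_zero, ne_eq, OfNat.ofNat_ne_zero, not_false_eq_true, zero_pow, sub_zero,
    Real.one_rpow, one_div, inv_one] at h
  -- h : μt * √(1 + ‖μ‖²·λ₀·1) = μ * √(1 + ‖μt‖²·λ₀·1)
  have hμ2 : (0:ℝ) < 1 + ‖μ‖ ^ 2 * (lam₀ * 1) := by positivity
  have hμt2 : (0:ℝ) < 1 + ‖μt‖ ^ 2 * (lam₀ * 1) := by positivity
  have hn := congrArg norm h
  simp only [norm_mul, Complex.norm_real, Real.norm_eq_abs,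
    abs_of_nonneg (Real.sqrt_nonneg _)] at hn
  have hsq := congrArg (· ^ 2) hn
  simp only [mul_pow, Real.sq_sqrt hμ2.le, Real.sq_sqrt hμt2.le] at hsq
  have hne : ‖μt‖ ^ 2 = ‖μ‖ ^ 2 := by nlinarith [norm_pos_iff.mpr hμ, norm_pos_iff.mpr hμt]
  rw [hne] at h
  have hs : Real.sqrt (1 + ‖μ‖ ^ 2 * (lam₀ * 1)) ≠ 0 := by positivity
  have : (↑(Real.sqrt (1 + ‖μ‖ ^ 2 * (lam₀ * 1))) : ℂ) ≠ 0 := by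
    exact_mod_cast Complex.ofReal_ne_zero.mpr hs
  exact (mul_right_cancel₀ this h).symm
end

section
/- Suppose X = [[X₀₀, X₀₁],[X₁₀, X₁₁]] is a bounded operator commuting with T = [[T₀, S₀₁],[0, T₁]], where T₀S₀₁ = S₀₁T₁, X₁₀ intertwines (X₁₀T₀ = T₁X₁₀), the composition X₁₀S₀₁, which commutes with T₁ and lies in ran σ_{T₁}, is quasi-nilpotent, and the commutant of T₁ contains no nonzero quasi-nilpotents. If additionally S₀₁ ≠ 0 has dense range, then X₁₀ = 0; i.e. every operator commuting with T is upper-triangular. -/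
/-- Let `X = [[X₀₀, X₀₁],[X₁₀, X₁₁]]` commute with `T = [[T₀, S₀₁],[0, T₁]]` where
`T₀S₀₁ = S₀₁T₁` (the commutation relations are written out blockwise).  Suppose every
operator commuting with `T₁` and lying in `ran σ_{T₁}` is quasi-nilpotent, the commutant
of `T₁` contains no nonzero quasi-nilpotent, and `S₀₁ ≠ 0` has dense range.  Then
`X₁₀ = 0`, i.e. every operator commuting with `T` is upper-triangular. -/
theorem stmt_18 {H₀ H₁ : Type*}
    [NormedAddCommGroup H₀] [InnerProductSpace ℂ H₀] [CompleteSpace H₀]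
    [NormedAddCommGroup H₁] [InnerProductSpace ℂ H₁] [CompleteSpace H₁]
    (T₀ : H₀ →L[ℂ] H₀) (T₁ : H₁ →L[ℂ] H₁) (S₀₁ : H₁ →L[ℂ] H₀)
    (X₀₀ : H₀ →L[ℂ] H₀) (X₀₁ : H₁ →L[ℂ] H₀) (X₁₀ : H₀ →L[ℂ] H₁) (X₁₁ : H₁ →L[ℂ] H₁)
    (hint : T₀ ∘L S₀₁ = S₀₁ ∘L T₁)
    (hc00 : X₀₀ ∘L T₀ = T₀ ∘L X₀₀ + S₀₁ ∘L X₁₀)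
    (hc01 : X₀₀ ∘L S₀₁ + X₀₁ ∘L T₁ = T₀ ∘L X₀₁ + S₀₁ ∘L X₁₁)
    (hc10 : X₁₀ ∘L T₀ = T₁ ∘L X₁₀)
    (hc11 : X₁₀ ∘L S₀₁ + X₁₁ ∘L T₁ = T₁ ∘L X₁₁)
    (hqn : ∀ A : H₁ →L[ℂ] H₁, A ∘L T₁ = T₁ ∘L A →
      (∃ Z : H₁ →L[ℂ] H₁, T₁ ∘L Z - Z ∘L T₁ = A) → spectrum ℂ A = {0})
    (hnoq : ∀ A : H₁ →L[ℂ] H₁, A ∘L T₁ = T₁ ∘L A → spectrum ℂ A = {0} → A = 0)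
    (hS0 : S₀₁ ≠ 0) (hdr : DenseRange S₀₁) :
    X₁₀ = 0 := by
  set A := X₁₀ ∘L S₀₁ with hA
  have hcomm : A ∘L T₁ = T₁ ∘L A := by
    calc A ∘L T₁ = X₁₀ ∘L (S₀₁ ∘L T₁) := by rw [hA, ContinuousLinearMap.comp_assoc]
    _ = (X₁₀ ∘L T₀) ∘L S₀₁ := by rw [← hint, ContinuousLinearMap.comp_assoc]
    _ = T₁ ∘L A := by rw [hc10, hA, ContinuousLinearMap.comp_assoc]
  have hran : ∃ Z : H₁ →L[ℂ] H₁, T₁ ∘L Z - Z ∘L T₁ = A := by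
    exact ⟨X₁₁, by rw [← hc11]; abel⟩
  have hA0 : A = 0 := hnoq A hcomm (hqn A hcomm hran)
  have heq : ∀ x, X₁₀ x = 0 := by
    have := Continuous.ext_on hdr X₁₀.continuous continuous_zero ?_
    · intro x; exact congrFun this x
    · rintro _ ⟨y, rfl⟩
      have := congrFun (congrArg DFunLike.coe hA0) y
      simpa [hA] using this
  ext x; exact heq x
end
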